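/- In the standing setup, a_0σ_2^o = −(1/3)[(−32λ + 19/16)σ_1 − (7/32)σ_2^e + (32λ² − 5λ + (1/8)μ + 127/1024)a_0 + (−(1/2)λ + 19/1024)(a_1 + a_{−1}) − (7/2048)(a_2 + a_{−2})]. -/

import Mathlib

/-- The `l`-eigenspace of the adjoint map `x ↦ a * x` of an element `a` of a commutative
nonassociative algebra. -/
def eig (k : Type*) {A : Type*} [Field k] [NonUnitalNonAssocCommRing A]
    [Module k A] [SMulCommClass k A A] [IsScalarTower k A A] (a : A) (l : k) :
    Submodule k A :=
  Module.End.eigenspace (LinearMap.mul k A a) l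

/-- `a` is a `V(4,3)`-axis: an idempotent which is semisimple with spectrum in
`{1, 0, 1/4, 1/32}`, primitive, and whose eigenspaces satisfy the Ising fusion rules. -/
def IsV43Axis (k : Type*) {A : Type*} [Field k] [NonUnitalNonAssocCommRing A]
    [Module k A] [SMulCommClass k A A] [IsScalarTower k A A] (a : A) : Prop :=
  a * a = a ∧
  (eig k a 1 ⊔ eig k a 0 ⊔ eig k a (1/4) ⊔ eig k a (1/32)) = ⊤ ∧
  eig k a 1 = Submodule.span k ({a} : Set A) ∧
  (∀ x ∈ eig k a 0, ∀ y ∈ eig k a 0, x * y ∈ eig k a 0) ∧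
  (∀ x ∈ eig k a 0, ∀ y ∈ eig k a (1/4), x * y ∈ eig k a (1/4)) ∧
  (∀ x ∈ eig k a 0, ∀ y ∈ eig k a (1/32), x * y ∈ eig k a (1/32)) ∧
  (∀ x ∈ eig k a (1/4), ∀ y ∈ eig k a (1/4), x * y ∈ eig k a 1 ⊔ eig k a 0) ∧
  (∀ x ∈ eig k a (1/4), ∀ y ∈ eig k a (1/32), x * y ∈ eig k a (1/32)) ∧
  (∀ x ∈ eig k a (1/32), ∀ y ∈ eig k a (1/32),
      x * y ∈ eig k a 1 ⊔ eig k a 0 ⊔ eig k a (1/4))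

/-- The doubly infinite sequence of axes `a_j`, `j ∈ ℤ`, with `a_{2i} = ρ^i(a_0)` and
`a_{2i+1} = ρ^i(a_1)`, where `ρ = τ1 ∘ τ0`. -/
def aSeq {k : Type*} {A : Type*} [Field k] [NonUnitalNonAssocCommRing A]
    [Module k A] [SMulCommClass k A A] [IsScalarTower k A A]
    (τ0 τ1 : A ≃ₗ[k] A) (a0 a1 : A) (j : ℤ) : A :=
  if Even j then ((τ0.trans τ1) ^ (j / 2)) a0 else ((τ0.trans τ1) ^ ((j - 1) / 2)) a1

/-!
Write `a₁ = λ a₀ + u + v + w` along the eigenspaces of `a₀`. The fusion rules put `v²` in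
`A₁ ⊕ A₀` and `w²` in `A₁ ⊕ A₀ ⊕ A_{1/4}`; comparing eigencomponents in `a₁² = a₁` then
expresses `v w` and `w²` through `a₀, u, v, w, u², u v, u w` and the `A₀`-part `n_v` of `v²`,
and gives `c_v + c_w + λ² = λ` for the `a₀`-coefficients `c_v, c_w` of `v², w²`.

The Miyamoto involution of an axis `a` is `x ↦ x - 2 π(x)`, where the projection `π` onto
`A_{1/32}(a)` is a polynomial in `ad a` corrected by `⟨a, x⟩ a`. Hence `a₋₁ = τ₀ a₁`,
`a₂ = τ₁ a₀` and `a₋₂ = τ₀ a₂` are explicit combinations of these eight vectors,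
`μ = ⟨a₀, a₂⟩ = 1 - 64 c_w`, and the identity becomes a comparison of coefficients.
-/

section

variable {k A : Type*} [Field k] [NonUnitalNonAssocCommRing A] [Module k A]
  [SMulCommClass k A A] [IsScalarTower k A A]

theorem mem_eig_iff {a x : A} {l : k} : x ∈ eig k a l ↔ a * x = l • x := by
  rw [eig, Module.End.mem_eigenspace_iff, LinearMap.mul_apply']

theorem form_eq_zero_of_mem_eig {B : LinearMap.BilinForm k A}
    (hassoc : ∀ x y z : A, B (x * y) z = B x (y * z)) {a x : A} {l : k} (ha : a * a = a)
    (hx : x ∈ eig k a l) (hl : l ≠ 1) : B a x = 0 := by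
  have h : B a x = l * B a x := by
    rw [← smul_eq_mul, ← map_smul, ← mem_eig_iff.1 hx, ← hassoc, ha]
  have : (1 - l) * B a x = 0 := by linear_combination h
  exact (mul_eq_zero.1 this).resolve_left (sub_ne_zero.2 hl.symm)

theorem eq_zero_of_add_mem_eig [CharZero k] {a x1 x0 x4 x32 : A}
    (hx1 : x1 ∈ eig k a 1) (hx0 : x0 ∈ eig k a 0) (hx4 : x4 ∈ eig k a (1/4))
    (hx32 : x32 ∈ eig k a (1/32)) (h : x1 + x0 + x4 + x32 = 0) :
    x1 = 0 ∧ x0 = 0 ∧ x4 = 0 ∧ x32 = 0 := by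
  rw [mem_eig_iff] at hx1 hx0 hx4 hx32
  have h1 := congrArg (a * ·) h
  simp only [mul_add, mul_zero, hx1, hx0, hx4, hx32, zero_smul, add_zero] at h1
  have h2 := congrArg (a * ·) h1
  simp only [mul_add, mul_smul_comm, mul_zero, hx1, hx4, hx32] at h2
  have h3 := congrArg (a * ·) h2
  simp only [mul_add, mul_smul_comm, mul_zero, hx1, hx4, hx32] at h3
  -- the coefficients come from inverting the Vandermonde matrix of `1, 0, 1/4, 1/32`
  refine ⟨?_, ?_, ?_, ?_⟩
  · linear_combination (norm := module)
      (1/93 : k) • h1 - (12/31 : k) • h2 + (128/93 : k) • h3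
  · linear_combination (norm := module)
      h - (37 : k) • h1 + (164 : k) • h2 - (128 : k) • h3
  · linear_combination (norm := module)
      (-16/21 : k) • h1 + (176/7 : k) • h2 - (512/21 : k) • h3
  · linear_combination (norm := module)
      (8192/217 : k) • h1 - (40960/217 : k) • h2 + (32768/217 : k) • h3

theorem eig_components_eq [CharZero k] {a x1 x0 x4 x32 y1 y0 y4 y32 : A}
    (hx1 : x1 ∈ eig k a 1) (hx0 : x0 ∈ eig k a 0) (hx4 : x4 ∈ eig k a (1/4))
    (hx32 : x32 ∈ eig k a (1/32)) (hy1 : y1 ∈ eig k a 1) (hy0 : y0 ∈ eig k a 0)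
    (hy4 : y4 ∈ eig k a (1/4)) (hy32 : y32 ∈ eig k a (1/32))
    (h : x1 + x0 + x4 + x32 = y1 + y0 + y4 + y32) :
    x1 = y1 ∧ x0 = y0 ∧ x4 = y4 ∧ x32 = y32 := by
  simp only [← sub_eq_zero (a := x1), ← sub_eq_zero (a := x0), ← sub_eq_zero (a := x4),
    ← sub_eq_zero (a := x32)]
  exact eq_zero_of_add_mem_eig (sub_mem hx1 hy1) (sub_mem hx0 hy0) (sub_mem hx4 hy4)
    (sub_mem hx32 hy32) (by rw [← sub_eq_zero] at h; rw [← h]; abel)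

theorem IsV43Axis.exists_eq_smul_of_mem_eig_one {a x : A} (ha : IsV43Axis k a)
    (hx : x ∈ eig k a 1) : ∃ c : k, x = c • a := by
  rw [ha.2.2.1, Submodule.mem_span_singleton] at hx
  exact hx.imp fun _ h => h.symm

theorem IsV43Axis.exists_decomp {a : A} (ha : IsV43Axis k a) (x : A) :
    ∃ c : k, ∃ u ∈ eig k a 0, ∃ v ∈ eig k a (1/4), ∃ w ∈ eig k a (1/32),
      x = c • a + u + v + w := by
  obtain ⟨y3, hy3, w, hw, rfl⟩ := Submodule.mem_sup.1 (ha.2.1 ▸ Submodule.mem_top (x := x))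
  obtain ⟨y2, hy2, v, hv, rfl⟩ := Submodule.mem_sup.1 hy3
  obtain ⟨y1, hy1, u, hu, rfl⟩ := Submodule.mem_sup.1 hy2
  obtain ⟨c, rfl⟩ := ha.exists_eq_smul_of_mem_eig_one hy1
  exact ⟨c, u, hu, v, hv, w, hw, rfl⟩

/-- For an axis `a` with `⟨a, a⟩ = 1`, this is the projection onto `A_{1/32}(a)`: Lagrange
interpolation in `x ↦ a x` at the eigenvalues `1/32, 1/4, 0`, once the `A_1(a)`-component
`⟨a, x⟩ a` has been read off from the form. -/
def proj32 (B : LinearMap.BilinForm k A) (a x : A) : A :=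
  (256/7 : k) • (a * x) - (1024/7 : k) • (a * (a * x)) + (768/7 * B a x) • a

theorem form_smul_add_add_add [CharZero k] {B : LinearMap.BilinForm k A}
    (hassoc : ∀ x y z : A, B (x * y) z = B x (y * z)) {a x0 x4 x32 : A} (ha : a * a = a)
    (hn : B a a = 1) (c : k) (hx0 : x0 ∈ eig k a 0) (hx4 : x4 ∈ eig k a (1/4))
    (hx32 : x32 ∈ eig k a (1/32)) : B a (c • a + x0 + x4 + x32) = c := by
  simp only [map_add, map_smul, hn, form_eq_zero_of_mem_eig hassoc ha hx0 zero_ne_one,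
    form_eq_zero_of_mem_eig hassoc ha hx4 (by norm_num),
    form_eq_zero_of_mem_eig hassoc ha hx32 (by norm_num), smul_eq_mul, mul_one, add_zero]

theorem proj32_smul_add_add_add [CharZero k] {B : LinearMap.BilinForm k A}
    (hassoc : ∀ x y z : A, B (x * y) z = B x (y * z)) {a x0 x4 x32 : A} (ha : a * a = a)
    (hn : B a a = 1) (c : k) (hx0 : x0 ∈ eig k a 0) (hx4 : x4 ∈ eig k a (1/4))
    (hx32 : x32 ∈ eig k a (1/32)) : proj32 B a (c • a + x0 + x4 + x32) = x32 := by
  have hB := form_smul_add_add_add hassoc ha hn c hx0 hx4 hx32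
  rw [mem_eig_iff] at hx0 hx4 hx32
  simp only [proj32, hB, mul_add, mul_smul_comm, mul_zero, ha, hx0, hx4, hx32, zero_smul]
  module

theorem miyamoto_apply_apply {a : A}
    (hsup : eig k a 1 ⊔ eig k a 0 ⊔ eig k a (1/4) ⊔ eig k a (1/32) = ⊤) {τ : A ≃ₗ[k] A}
    (hτp : ∀ x ∈ eig k a 1 ⊔ eig k a 0 ⊔ eig k a (1/4), τ x = x)
    (hτm : ∀ x ∈ eig k a (1/32), τ x = -x) (x : A) : τ (τ x) = x := by
  obtain ⟨y, hy, w, hw, rfl⟩ := Submodule.mem_sup.1 (hsup ▸ Submodule.mem_top (x := x))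
  rw [map_add, hτp y hy, hτm w hw, map_add, map_neg, hτp y hy, hτm w hw, neg_neg]

theorem miyamoto_symm_apply {a : A}
    (hsup : eig k a 1 ⊔ eig k a 0 ⊔ eig k a (1/4) ⊔ eig k a (1/32) = ⊤) {τ : A ≃ₗ[k] A}
    (hτp : ∀ x ∈ eig k a 1 ⊔ eig k a 0 ⊔ eig k a (1/4), τ x = x)
    (hτm : ∀ x ∈ eig k a (1/32), τ x = -x) (x : A) : τ.symm x = τ x :=
  τ.symm_apply_eq.2 (miyamoto_apply_apply hsup hτp hτm x).symm

theorem miyamoto_apply_self {a : A} (ha : a * a = a) {τ : A ≃ₗ[k] A}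
    (hτp : ∀ x ∈ eig k a 1 ⊔ eig k a 0 ⊔ eig k a (1/4), τ x = x) : τ a = a :=
  hτp a (Submodule.mem_sup_left (Submodule.mem_sup_left (mem_eig_iff.2 (by rw [ha, one_smul]))))

theorem IsV43Axis.miyamoto_apply [CharZero k] {B : LinearMap.BilinForm k A}
    (hassoc : ∀ x y z : A, B (x * y) z = B x (y * z)) {a : A} (ha : IsV43Axis k a)
    (hn : B a a = 1) {τ : A ≃ₗ[k] A}
    (hτp : ∀ x ∈ eig k a 1 ⊔ eig k a 0 ⊔ eig k a (1/4), τ x = x)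
    (hτm : ∀ x ∈ eig k a (1/32), τ x = -x) (x : A) : τ x = x - (2 : k) • proj32 B a x := by
  obtain ⟨c, u, hu, v, hv, w, hw, rfl⟩ := ha.exists_decomp x
  have hu' : τ u = u := hτp u (Submodule.mem_sup_left (Submodule.mem_sup_right hu))
  have hv' : τ v = v := hτp v (Submodule.mem_sup_right hv)
  rw [proj32_smul_add_add_add hassoc ha.1 hn c hu hv hw, map_add, map_add, map_add, map_smul,
    miyamoto_apply_self ha.1 hτp, hu', hv', hτm w hw]
  module

theorem aSeq_one (τ0 τ1 : A ≃ₗ[k] A) (a0 a1 : A) : aSeq τ0 τ1 a0 a1 1 = a1 := by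
  simp [aSeq]

theorem aSeq_two (τ0 τ1 : A ≃ₗ[k] A) (a0 a1 : A) : aSeq τ0 τ1 a0 a1 2 = τ1 (τ0 a0) := by
  simp [aSeq]

theorem aSeq_neg_one (τ0 τ1 : A ≃ₗ[k] A) (a0 a1 : A) :
    aSeq τ0 τ1 a0 a1 (-1) = τ0.symm (τ1.symm a1) := by
  simp [aSeq]

theorem aSeq_neg_two (τ0 τ1 : A ≃ₗ[k] A) (a0 a1 : A) :
    aSeq τ0 τ1 a0 a1 (-2) = τ0.symm (τ1.symm a0) := by
  simp [aSeq]

end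

/-- The vector `λ a₀ + u + v + w` written along the eigenspaces of the axis `a₀`, together with
the decompositions `v² = c_v a₀ + n_v` and `w² = c_w a₀ + n_w + m_w` allowed by the fusion
rules. -/
structure Frame (k : Type*) {A : Type*} [Field k] [NonUnitalNonAssocCommRing A] [Module k A]
    [SMulCommClass k A A] [IsScalarTower k A A] (a0 : A) where
  lm : k
  cv : k
  cw : k
  u : A
  v : A
  w : A
  nv : A
  nw : A
  mw : A
  u_mem : u ∈ eig k a0 0
  v_mem : v ∈ eig k a0 (1/4)
  w_mem : w ∈ eig k a0 (1/32)
  nv_mem : nv ∈ eig k a0 0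
  nw_mem : nw ∈ eig k a0 0
  mw_mem : mw ∈ eig k a0 (1/4)
  uu_mem : u * u ∈ eig k a0 0
  uv_mem : u * v ∈ eig k a0 (1/4)
  uw_mem : u * w ∈ eig k a0 (1/32)
  vw_mem : v * w ∈ eig k a0 (1/32)
  v_mul_v : v * v = cv • a0 + nv
  w_mul_w : w * w = cw • a0 + nw + mw

namespace Frame

variable {k A : Type*} [Field k] [NonUnitalNonAssocCommRing A] [Module k A]
  [SMulCommClass k A A] [IsScalarTower k A A] {a0 : A}

def vec (F : Frame k a0) : A := F.lm • a0 + F.u + F.v + F.w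

theorem exists_vec_eq (ha : IsV43Axis k a0) (x : A) : ∃ F : Frame k a0, F.vec = x := by
  obtain ⟨f00, f04, f032, f44, f432, f3232⟩ := ha.2.2.2
  obtain ⟨lm, u, hu, v, hv, w, hw, rfl⟩ := ha.exists_decomp x
  obtain ⟨y, hy, nv, hnv, hvv⟩ := Submodule.mem_sup.1 (f44 v hv v hv)
  obtain ⟨cv, rfl⟩ := ha.exists_eq_smul_of_mem_eig_one hy
  obtain ⟨y', hy', mw, hmw, hww⟩ := Submodule.mem_sup.1 (f3232 w hw w hw)
  obtain ⟨y, hy, nw, hnw, rfl⟩ := Submodule.mem_sup.1 hy'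
  obtain ⟨cw, rfl⟩ := ha.exists_eq_smul_of_mem_eig_one hy
  exact ⟨⟨lm, cv, cw, u, v, w, nv, nw, mw, hu, hv, hw, hnv, hnw, hmw, f00 u hu u hu,
    f04 u hu v hv, f032 u hu w hw, f432 v hv w hw, hvv.symm, hww.symm⟩, rfl⟩

variable (F : Frame k a0)

theorem form_vec [CharZero k] {B : LinearMap.BilinForm k A}
    (hassoc : ∀ x y z : A, B (x * y) z = B x (y * z)) (h0 : a0 * a0 = a0) (hn : B a0 a0 = 1) :
    B a0 F.vec = F.lm :=
  form_smul_add_add_add hassoc h0 hn _ F.u_mem F.v_mem F.w_mem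

theorem a0_mul_table (h0 : a0 * a0 = a0) :
    a0 * a0 = a0 ∧ a0 * F.u = 0 ∧ F.u * a0 = 0 ∧ a0 * F.v = (1/4 : k) • F.v ∧
      F.v * a0 = (1/4 : k) • F.v ∧ a0 * F.w = (1/32 : k) • F.w ∧
      F.w * a0 = (1/32 : k) • F.w ∧ a0 * (F.u * F.u) = 0 ∧
      a0 * (F.u * F.v) = (1/4 : k) • (F.u * F.v) ∧
      a0 * (F.u * F.w) = (1/32 : k) • (F.u * F.w) ∧ a0 * F.nv = 0 := by
  have hu := mem_eig_iff.1 F.u_mem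
  have hv := mem_eig_iff.1 F.v_mem
  have hw := mem_eig_iff.1 F.w_mem
  rw [zero_smul] at hu
  refine ⟨h0, hu, mul_comm F.u a0 ▸ hu, hv, mul_comm F.v a0 ▸ hv, hw, mul_comm F.w a0 ▸ hw,
    ?_, mem_eig_iff.1 F.uv_mem, mem_eig_iff.1 F.uw_mem, ?_⟩
  · simpa using mem_eig_iff.1 F.uu_mem
  · simpa using mem_eig_iff.1 F.nv_mem

theorem vec_mul_vec [CharZero k] (h0 : a0 * a0 = a0) :
    F.vec * F.vec = (F.cv + F.cw + F.lm ^ 2) • a0 + (F.u * F.u + F.nv + F.nw) +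
      ((F.lm / 2) • F.v + (2 : k) • (F.u * F.v) + F.mw) +
      ((F.lm / 16) • F.w + (2 : k) • (F.u * F.w) + (2 : k) • (F.v * F.w)) := by
  simp only [vec, mul_add, add_mul, smul_mul_assoc, mul_smul_comm, F.a0_mul_table h0,
    mul_comm F.v F.u, mul_comm F.w F.u, mul_comm F.w F.v, F.v_mul_v, F.w_mul_w, smul_zero]
  module

theorem relations_of_vec_mul_self [CharZero k] (h0 : a0 * a0 = a0)
    (hF : F.vec * F.vec = F.vec) :
    (F.cv + F.cw + F.lm ^ 2) • a0 = F.lm • a0 ∧ F.u * F.u + F.nv + F.nw = F.u ∧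
      (F.lm / 2) • F.v + (2 : k) • (F.u * F.v) + F.mw = F.v ∧
      (F.lm / 16) • F.w + (2 : k) • (F.u * F.w) + (2 : k) • (F.v * F.w) = F.w := by
  have ha0 : a0 ∈ eig k a0 1 := mem_eig_iff.2 (by rw [h0, one_smul])
  refine eig_components_eq (Submodule.smul_mem _ _ ha0)
    (add_mem (add_mem F.uu_mem F.nv_mem) F.nw_mem)
    (add_mem (add_mem (Submodule.smul_mem _ _ F.v_mem) (Submodule.smul_mem _ _ F.uv_mem))
      F.mw_mem)
    (add_mem (add_mem (Submodule.smul_mem _ _ F.w_mem) (Submodule.smul_mem _ _ F.uw_mem))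
      (Submodule.smul_mem _ _ F.vw_mem))
    (Submodule.smul_mem _ _ ha0) F.u_mem F.v_mem F.w_mem ?_
  rw [← F.vec_mul_vec h0, hF, vec]

theorem cv_eq [CharZero k] (h0 : a0 * a0 = a0) (ha0 : a0 ≠ 0) (hF : F.vec * F.vec = F.vec) :
    F.cv = F.lm - F.lm ^ 2 - F.cw := by
  have := smul_left_injective k ha0 (F.relations_of_vec_mul_self h0 hF).1
  linear_combination this

theorem mul_table [CharZero k] (h0 : a0 * a0 = a0) (hF : F.vec * F.vec = F.vec) :
    F.v * F.u = F.u * F.v ∧ F.w * F.u = F.u * F.w ∧ F.v * F.v = F.cv • a0 + F.nv ∧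
      F.v * F.w = (1/2 - F.lm / 32) • F.w - F.u * F.w ∧
      F.w * F.v = (1/2 - F.lm / 32) • F.w - F.u * F.w ∧
      F.w * F.w = F.cw • a0 + F.u - F.u * F.u - F.nv + (1 - F.lm / 2) • F.v -
        (2 : k) • (F.u * F.v) := by
  obtain ⟨-, h0c, h4c, h32c⟩ := F.relations_of_vec_mul_self h0 hF
  have hvw : F.v * F.w = (1/2 - F.lm / 32) • F.w - F.u * F.w := by
    linear_combination (norm := module) (1/2 : k) • h32c
  refine ⟨mul_comm _ _, mul_comm _ _, F.v_mul_v, hvw, mul_comm F.w F.v ▸ hvw, ?_⟩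
  rw [F.w_mul_w]
  linear_combination (norm := module) h0c + h4c

theorem form_a0_sub_two_smul_proj32 [CharZero k] {B : LinearMap.BilinForm k A}
    (hsymm : ∀ x y : A, B x y = B y x) (hassoc : ∀ x y z : A, B (x * y) z = B x (y * z))
    (h0 : a0 * a0 = a0) (hn : B a0 a0 = 1) (ha0 : a0 ≠ 0) (hF : F.vec * F.vec = F.vec) :
    B a0 (a0 - (2 : k) • proj32 B F.vec a0) = 1 - 64 * F.cw := by
  rw [proj32, hsymm F.vec, F.form_vec hassoc h0 hn]
  simp only [vec, mul_add, add_mul, smul_mul_assoc, mul_smul_comm, F.a0_mul_table h0,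
    F.mul_table h0 hF, add_zero]
  simp only [map_add, map_sub, map_smul, smul_eq_mul, hn,
    form_eq_zero_of_mem_eig hassoc h0 F.u_mem zero_ne_one,
    form_eq_zero_of_mem_eig hassoc h0 F.v_mem (by norm_num),
    form_eq_zero_of_mem_eig hassoc h0 F.w_mem (by norm_num),
    form_eq_zero_of_mem_eig hassoc h0 F.nv_mem zero_ne_one,
    form_eq_zero_of_mem_eig hassoc h0 F.uu_mem zero_ne_one,
    form_eq_zero_of_mem_eig hassoc h0 F.uv_mem (by norm_num),
    form_eq_zero_of_mem_eig hassoc h0 F.uw_mem (by norm_num)]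
  rw [F.cv_eq h0 ha0 hF]
  ring

end Frame

theorem a0_mul_sigma2o_general
    {k : Type*} [Field k] [CharZero k] {A : Type*} [NonUnitalNonAssocCommRing A]
    [Module k A] [SMulCommClass k A A] [IsScalarTower k A A]
    (B : LinearMap.BilinForm k A)
    (hsymm : ∀ x y : A, B x y = B y x)
    (hassoc : ∀ x y z : A, B (x * y) z = B x (y * z))
    (a0 a1 : A) (ha0 : IsV43Axis k a0) (ha1 : IsV43Axis k a1)
    (hn0 : B a0 a0 = 1) (hn1 : B a1 a1 = 1)
    (τ0 τ1 : A ≃ₗ[k] A)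
    (hτ0p : ∀ x ∈ eig k a0 1 ⊔ eig k a0 0 ⊔ eig k a0 (1/4), τ0 x = x)
    (hτ0m : ∀ x ∈ eig k a0 (1/32), τ0 x = -x)
    (hτ1p : ∀ x ∈ eig k a1 1 ⊔ eig k a1 0 ⊔ eig k a1 (1/4), τ1 x = x)
    (hτ1m : ∀ x ∈ eig k a1 (1/32), τ1 x = -x)
    (a : ℤ → A) (ha : a = aSeq τ0 τ1 a0 a1)
    (lm mu : k) (hlm : lm = B a0 a1) (hmu : mu = B a0 (a 2))
    (σ1 σ2e σ2o : A)
    (hσ1 : σ1 = a0 * a1 - (1/32 : k) • (a0 + a1))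
    (hσ2e : σ2e = a0 * a 2 - (1/32 : k) • (a0 + a 2))
    (hσ2o : σ2o = a (-1) * a1 - (1/32 : k) • (a (-1) + a1)) :
    a0 * σ2o =
      -((1/3 : k) • ((-32 * lm + 19/16) • σ1 - (7/32 : k) • σ2e +
        (32 * lm ^ 2 - 5 * lm + (1/8 : k) * mu + 127/1024) • a0 +
        (-((1/2 : k) * lm) + 19/1024) • (a 1 + a (-1)) - (7/2048 : k) • (a 2 + a (-2)))) := by
  have h0 : a0 * a0 = a0 := ha0.1
  have ha0ne : a0 ≠ 0 := by rintro rfl; simp at hn0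
  have hτ0 := ha0.miyamoto_apply hassoc hn0 hτ0p hτ0m
  have hτ1 := ha1.miyamoto_apply hassoc hn1 hτ1p hτ1m
  obtain ⟨F, rfl⟩ := Frame.exists_vec_eq ha0 a1
  have hF : F.vec * F.vec = F.vec := ha1.1
  obtain rfl : lm = F.lm := hlm.trans (F.form_vec hassoc h0 hn0)
  subst ha hσ1 hσ2e hσ2o
  have h2 : aSeq τ0 τ1 a0 F.vec 2 = a0 - (2 : k) • proj32 B F.vec a0 := by
    rw [aSeq_two, miyamoto_apply_self h0 hτ0p, hτ1]
  have hm1 : aSeq τ0 τ1 a0 F.vec (-1) = F.vec - (2 : k) • F.w := by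
    rw [aSeq_neg_one, miyamoto_symm_apply ha1.2.1 hτ1p hτ1m, miyamoto_apply_self hF hτ1p,
      miyamoto_symm_apply ha0.2.1 hτ0p hτ0m, hτ0, Frame.vec,
      proj32_smul_add_add_add hassoc h0 hn0 _ F.u_mem F.v_mem F.w_mem]
  have hm2 : aSeq τ0 τ1 a0 F.vec (-2) =
      aSeq τ0 τ1 a0 F.vec 2 - (2 : k) • proj32 B a0 (aSeq τ0 τ1 a0 F.vec 2) := by
    rw [aSeq_neg_two, miyamoto_symm_apply ha1.2.1 hτ1p hτ1m,
      miyamoto_symm_apply ha0.2.1 hτ0p hτ0m, ← hτ0, aSeq_two, miyamoto_apply_self h0 hτ0p]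
  have hcw : F.cw = (1 - mu) / 64 := by
    rw [hmu, h2, F.form_a0_sub_two_smul_proj32 hsymm hassoc h0 hn0 ha0ne hF]
    ring
  rw [aSeq_one, hm1, hm2, proj32, ← hmu, h2, proj32, hsymm F.vec, F.form_vec hassoc h0 hn0]
  simp only [Frame.vec, mul_add, add_mul, mul_sub, sub_mul, smul_mul_assoc, mul_smul_comm,
    F.a0_mul_table h0, F.mul_table h0 hF, mul_zero]
  rw [F.cv_eq h0 ha0ne hF, hcw]
  match_scalars <;> ring

theorem a0_mul_sigma2o
    {k : Type*} [Field k] [CharZero k] {A : Type*} [NonUnitalNonAssocCommRing A]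
    [Module k A] [SMulCommClass k A A] [IsScalarTower k A A]
    (B : LinearMap.BilinForm k A)
    (hsymm : ∀ x y : A, B x y = B y x)
    (hassoc : ∀ x y z : A, B (x * y) z = B x (y * z))
    (a0 a1 : A) (ha0 : IsV43Axis k a0) (ha1 : IsV43Axis k a1)
    (hn0 : B a0 a0 = 1) (hn1 : B a1 a1 = 1)
    (τ0 τ1 : A ≃ₗ[k] A)
    (hτ0p : ∀ x ∈ eig k a0 1 ⊔ eig k a0 0 ⊔ eig k a0 (1/4), τ0 x = x)
    (hτ0m : ∀ x ∈ eig k a0 (1/32), τ0 x = -x)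
    (hτ1p : ∀ x ∈ eig k a1 1 ⊔ eig k a1 0 ⊔ eig k a1 (1/4), τ1 x = x)
    (hτ1m : ∀ x ∈ eig k a1 (1/32), τ1 x = -x)
    (hτ0mul : ∀ x y : A, τ0 (x * y) = τ0 x * τ0 y)
    (hτ1mul : ∀ x y : A, τ1 (x * y) = τ1 x * τ1 y)
    (hτ0B : ∀ x y : A, B (τ0 x) (τ0 y) = B x y)
    (hτ1B : ∀ x y : A, B (τ1 x) (τ1 y) = B x y)
    (a : ℤ → A) (ha : a = aSeq τ0 τ1 a0 a1)
    (lm mu : k) (hlm : lm = B a0 a1) (hmu : mu = B a0 (a 2))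
    (σ1 σ2e σ2o : A)
    (hσ1 : σ1 = a0 * a1 - (1/32 : k) • (a0 + a1))
    (hσ2e : σ2e = a0 * a 2 - (1/32 : k) • (a0 + a 2))
    (hσ2o : σ2o = a (-1) * a1 - (1/32 : k) • (a (-1) + a1)) :
    a0 * σ2o =
      -((1/3 : k) • ((-32 * lm + 19/16) • σ1 - (7/32 : k) • σ2e +
        (32 * lm ^ 2 - 5 * lm + (1/8 : k) * mu + 127/1024) • a0 +
        (-((1/2 : k) * lm) + 19/1024) • (a 1 + a (-1)) - (7/2048 : k) • (a 2 + a (-2)))) :=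
  a0_mul_sigma2o_general B hsymm hassoc a0 a1 ha0 ha1 hn0 hn1 τ0 τ1 hτ0p hτ0m hτ1p hτ1m a ha lm mu
    hlm hmu σ1 σ2e σ2o hσ1 hσ2e hσ2o
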